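/- (Weight-invariant property, two-task case) Let X₀ ∈ ℝ^{N₀×d}, Y₀ ∈ ℝ^{N₀×m}, X₁ ∈ ℝ^{N₁×d}, Y₁ ∈ ℝ^{N₁×m}, γ > 0. Define R₀ = (X₀ᵀX₀ + γI)⁻¹, W₀ = R₀X₀ᵀY₀, R₁ = R₀ − R₀X₁ᵀ(I + X₁R₀X₁ᵀ)⁻¹X₁R₀, and W₁ = W₀ − R₁X₁ᵀX₁W₀ + R₁X₁ᵀY₁. Then W₁ = (X₀ᵀX₀ + X₁ᵀX₁ + γI)⁻¹(X₀ᵀY₀ + X₁ᵀY₁), i.e., W₁ equals the joint ridge regression solution on the concatenated data. -/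

import Mathlib

/-! With `A = X₀ᵀX₀ + γI`, the Woodbury identity says that `R₁` is exactly `(A + X₁ᵀX₁)⁻¹`, the
inverse of the joint regularised Gram matrix. Writing `B = A + X₁ᵀX₁`, the correction term
`R₁X₁ᵀX₁W₀ = B⁻¹(B - A)A⁻¹X₀ᵀY₀` collapses to `W₀ - B⁻¹X₀ᵀY₀`, so `W₁ = B⁻¹(X₀ᵀY₀ + X₁ᵀY₁)`. -/

open Matrix

namespace Matrix

theorem PosSemidef.add_smul_one_posDef {n : Type*} [DecidableEq n] {S : Matrix n n ℝ} (hS : S.PosSemidef) {γ : ℝ}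
    (hγ : 0 < γ) : (S + γ • (1 : Matrix n n ℝ)).PosDef :=
  PosDef.posSemidef_add hS <| by
    simpa only [smul_one_eq_diagonal] using posDef_diagonal_iff.mpr fun _ => hγ

variable {n k p : Type*} [Fintype n] [DecidableEq n] [Fintype k] [DecidableEq k]

theorem PosDef.inv_add_transpose_mul_self {A : Matrix n n ℝ} (hA : A.PosDef)
    (X : Matrix k n ℝ) :
    (A + Xᵀ * X)⁻¹ = A⁻¹ - A⁻¹ * Xᵀ * (1 + X * A⁻¹ * Xᵀ)⁻¹ * X * A⁻¹ := by
  have hC : (1 + X * A⁻¹ * Xᵀ).PosDef := by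
    simpa using PosDef.one.add_posSemidef (hA.inv.posSemidef.mul_mul_conjTranspose_same X)
  simpa using add_mul_mul_inv_eq_sub A Xᵀ 1 X hA.isUnit isUnit_one (by simpa using hC.isUnit)

theorem inv_mul_sub_inv_add_mul_add {R : Type*} [CommRing R] {A G : Matrix n n R}
    (hA : IsUnit A) (hAG : IsUnit (A + G)) (b c : Matrix n p R) :
    A⁻¹ * b - (A + G)⁻¹ * G * (A⁻¹ * b) + (A + G)⁻¹ * c = (A + G)⁻¹ * (b + c) := by
  have hG : (A + G)⁻¹ * G = 1 - (A + G)⁻¹ * A := by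
    rw [eq_sub_iff_add_eq, ← Matrix.mul_add, add_comm G,
      nonsing_inv_mul _ ((isUnit_iff_isUnit_det _).mp hAG)]
  rw [hG, Matrix.sub_mul, Matrix.one_mul, sub_sub_cancel, Matrix.mul_assoc,
    mul_nonsing_inv_cancel_left _ _ ((isUnit_iff_isUnit_det _).mp hA), Matrix.mul_add]

end Matrix

/-- weight-invariant property, two-task case. -/
theorem weight_invariant_two_task (N₀ N₁ d m : ℕ)
    (X₀ : Matrix (Fin N₀) (Fin d) ℝ) (Y₀ : Matrix (Fin N₀) (Fin m) ℝ)
    (X₁ : Matrix (Fin N₁) (Fin d) ℝ) (Y₁ : Matrix (Fin N₁) (Fin m) ℝ)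
    (γ : ℝ) (hγ : 0 < γ)
    (R₀ R₁ : Matrix (Fin d) (Fin d) ℝ) (W₀ W₁ : Matrix (Fin d) (Fin m) ℝ)
    (hR₀ : R₀ = (X₀ᵀ * X₀ + γ • (1 : Matrix (Fin d) (Fin d) ℝ))⁻¹)
    (hW₀ : W₀ = R₀ * X₀ᵀ * Y₀)
    (hR₁ : R₁ = R₀ - R₀ * X₁ᵀ * ((1 : Matrix (Fin N₁) (Fin N₁) ℝ) + X₁ * R₀ * X₁ᵀ)⁻¹ * X₁ * R₀)
    (hW₁ : W₁ = W₀ - R₁ * X₁ᵀ * X₁ * W₀ + R₁ * X₁ᵀ * Y₁) :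
    W₁ = (X₀ᵀ * X₀ + X₁ᵀ * X₁ + γ • (1 : Matrix (Fin d) (Fin d) ℝ))⁻¹ *
      (X₀ᵀ * Y₀ + X₁ᵀ * Y₁) := by
  rw [add_right_comm (X₀ᵀ * X₀) (X₁ᵀ * X₁)]
  set A := X₀ᵀ * X₀ + γ • (1 : Matrix (Fin d) (Fin d) ℝ)
  have hA : A.PosDef := by
    simpa using (posSemidef_conjTranspose_mul_self X₀).add_smul_one_posDef hγ
  have hB : (A + X₁ᵀ * X₁).PosDef :=
    hA.add_posSemidef (by simpa using posSemidef_conjTranspose_mul_self X₁)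
  have hR₁B : R₁ = (A + X₁ᵀ * X₁)⁻¹ := by
    rw [hR₁, hR₀, hA.inv_add_transpose_mul_self]
  rw [hW₁, hW₀, hR₀, hR₁B, ← inv_mul_sub_inv_add_mul_add hA.isUnit hB.isUnit]
  simp only [Matrix.mul_assoc]
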